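/- (Quantitative Corollary 1, first part) Let h ∈ ℝⁿ with |h_i| ≤ 1 for every i, and let ε ≥ 0. Suppose every gate entry is within ε of 0 or 1 in the sense that u(h)_i (1 − u(h)_i) ≤ ε and r(h)_i (1 − r(h)_i) ≤ ε for all i. Then the constants α = δ_u (max_i |h_i| + max_i |c(h)_i|) ‖U_u‖₂ + max_i (1 − u(h)_i) and β = (max_i u(h)_i)(δ_r ‖U_r‖₂ max_i |h_i| + max_i r(h)_i), with δ_u = max_i u(h)_i (1 − u(h)_i) and δ_r = max_i r(h)_i (1 − r(h)_i), satisfy α + β ≤ 2 + ε (2‖U_u‖₂ + ‖U_r‖₂). -/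

import Mathlib

noncomputable section

/-- The sigmoid function `σ(t) = 1/(1+exp(-t))`. -/
def sigmoid (t : ℝ) : ℝ := 1 / (1 + Real.exp (-t))

/-- The operator norm of a square matrix induced by the Euclidean norm. -/
def opNorm2 {n : ℕ} (M : Matrix (Fin n) (Fin n) ℝ) : ℝ :=
  ‖Matrix.toEuclideanCLM (𝕜 := ℝ) M‖

/-!
Every gate entry, every entry of `c(h)` in absolute value, and every `|h_i|` lies in `[0, 1]`,
hence so do their suprema, while `δ_u, δ_r ∈ [0, ε]`. This gives `α ≤ 1 + 2ε‖U_u‖₂` (with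
`|h_i| + |c(h)_i| ≤ 2`) and `β ≤ 1 + ε‖U_r‖₂` (with `max_i u(h)_i ≤ 1`).
-/

open Set

theorem sigmoid_eq_real_sigmoid : sigmoid = Real.sigmoid := by
  funext t
  rw [sigmoid, Real.sigmoid, one_div]

theorem sigmoid_mem_Icc (t : ℝ) : sigmoid t ∈ Icc (0 : ℝ) 1 := by
  rw [sigmoid_eq_real_sigmoid]
  exact ⟨(Real.sigmoid_pos t).le, Real.sigmoid_le_one t⟩

theorem Real.iSup_mem_Icc_zero_one {ι : Sort*} {f : ι → ℝ} (hf : ∀ i, f i ∈ Icc (0 : ℝ) 1) :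
    ⨆ i, f i ∈ Icc (0 : ℝ) 1 :=
  ⟨Real.iSup_nonneg fun i => (hf i).1, Real.iSup_le (fun i => (hf i).2) zero_le_one⟩

theorem mul_one_sub_nonneg_of_mem_Icc {t : ℝ} (ht : t ∈ Icc (0 : ℝ) 1) : 0 ≤ t * (1 - t) :=
  mul_nonneg ht.1 (sub_nonneg.2 ht.2)

theorem gru_alpha_le {δ ε a c N d : ℝ} (hδ : δ ∈ Icc 0 ε) (ha : a ∈ Icc (0 : ℝ) 1)
    (hc : c ∈ Icc (0 : ℝ) 1) (hN : 0 ≤ N) (hd : d ≤ 1) :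
    δ * (a + c) * N + d ≤ 1 + 2 * ε * N := by
  have hδac : δ * (a + c) ≤ ε * 2 :=
    mul_le_mul hδ.2 (by linarith [ha.2, hc.2]) (by linarith [ha.1, hc.1]) (hδ.1.trans hδ.2)
  linarith [mul_le_mul_of_nonneg_right hδac hN]

theorem gru_beta_le {e δ ε M a g : ℝ} (he : e ∈ Icc (0 : ℝ) 1) (hδ : δ ∈ Icc 0 ε) (hM : 0 ≤ M)
    (ha : a ∈ Icc (0 : ℝ) 1) (hg : g ∈ Icc (0 : ℝ) 1) :
    e * (δ * M * a + g) ≤ 1 + ε * M := by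
  have hδM : 0 ≤ δ * M := mul_nonneg hδ.1 hM
  have hδMa : δ * M * a ≤ ε * M :=
    (mul_le_of_le_one_right hδM ha.2).trans (mul_le_mul_of_nonneg_right hδ.2 hM)
  calc e * (δ * M * a + g) ≤ δ * M * a + g :=
        mul_le_of_le_one_left (add_nonneg (mul_nonneg hδM ha.1) hg.1) he.2
    _ ≤ 1 + ε * M := by linarith [hg.2]

/-- Quantitative Corollary 1, first part: if `|h_i| ≤ 1` for all `i`, `ε ≥ 0`,
and every gate entry is within `ε` of `0` or `1` in the sense that
`u(h)_i (1 - u(h)_i) ≤ ε` and `r(h)_i (1 - r(h)_i) ≤ ε` for all `i`, then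
`α + β ≤ 2 + ε (2‖U_u‖₂ + ‖U_r‖₂)`. -/
theorem gru_alpha_beta_near_binary_gates {n m : ℕ} (x : Fin m → ℝ)
    (Wr Wu Wc : Matrix (Fin n) (Fin m) ℝ) (Ur Uu Uc : Matrix (Fin n) (Fin n) ℝ)
    (br bu bc : EuclideanSpace ℝ (Fin n)) (h : EuclideanSpace ℝ (Fin n))
    (hh : ∀ i, |h i| ≤ 1) (ε : ℝ) (hε : 0 ≤ ε) :
    let r : EuclideanSpace ℝ (Fin n) → EuclideanSpace ℝ (Fin n) :=
      fun h => WithLp.toLp 2 (fun i => sigmoid (Wr.mulVec x i + Ur.mulVec h i + br i))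
    let u : EuclideanSpace ℝ (Fin n) → EuclideanSpace ℝ (Fin n) :=
      fun h => WithLp.toLp 2 (fun i => sigmoid (Wu.mulVec x i + Uu.mulVec h i + bu i))
    let c : EuclideanSpace ℝ (Fin n) → EuclideanSpace ℝ (Fin n) :=
      fun h => WithLp.toLp 2 (fun i => Real.tanh (Wc.mulVec x i + Uc.mulVec (fun j => r h j * h j) i + bc i))
    let δu : ℝ := ⨆ i, u h i * (1 - u h i)
    let δr : ℝ := ⨆ i, r h i * (1 - r h i)
    let α : ℝ := δu * ((⨆ i, |h i|) + ⨆ i, |c h i|) * opNorm2 Uu + ⨆ i, (1 - u h i)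
    let β : ℝ := (⨆ i, u h i) * (δr * opNorm2 Ur * (⨆ i, |h i|) + ⨆ i, r h i)
    (∀ i, u h i * (1 - u h i) ≤ ε) →
    (∀ i, r h i * (1 - r h i) ≤ ε) →
    α + β ≤ 2 + ε * (2 * opNorm2 Uu + opNorm2 Ur) := by
  intro r u c δu δr α β hu hr
  have hu01 (i : Fin n) : u h i ∈ Icc (0 : ℝ) 1 := sigmoid_mem_Icc _
  have hr01 (i : Fin n) : r h i ∈ Icc (0 : ℝ) 1 := sigmoid_mem_Icc _
  have hδu : δu ∈ Icc 0 ε :=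
    ⟨Real.iSup_nonneg fun i => mul_one_sub_nonneg_of_mem_Icc (hu01 i), Real.iSup_le hu hε⟩
  have hδr : δr ∈ Icc 0 ε :=
    ⟨Real.iSup_nonneg fun i => mul_one_sub_nonneg_of_mem_Icc (hr01 i), Real.iSup_le hr hε⟩
  have hsup_h : ⨆ i, |h i| ∈ Icc (0 : ℝ) 1 :=
    Real.iSup_mem_Icc_zero_one fun i => ⟨abs_nonneg _, hh i⟩
  have hsup_c : ⨆ i, |c h i| ∈ Icc (0 : ℝ) 1 :=
    Real.iSup_mem_Icc_zero_one fun i => ⟨abs_nonneg _, (Real.abs_tanh_lt_one _).le⟩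
  have hα : α ≤ 1 + 2 * ε * opNorm2 Uu :=
    gru_alpha_le hδu hsup_h hsup_c (norm_nonneg _)
      (Real.iSup_le (fun i => by linarith [(hu01 i).1]) zero_le_one)
  have hβ : β ≤ 1 + ε * opNorm2 Ur :=
    gru_beta_le (Real.iSup_mem_Icc_zero_one hu01) hδr (norm_nonneg _) hsup_h
      (Real.iSup_mem_Icc_zero_one hr01)
  linarith
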